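/- arXiv:1310.0992 — 2 statements merged into one kernel-verified Lean document; each statement's English description precedes it below -/
import Mathlib

section
/- Suppose (X,B) is a resolvable (v,k,λ)-BIBD with r parallel classes and (Y,C) is a (w,k',λ'_2)-BIBD with w = v/k and replication number r'. Then the design (X,D) obtained by Construction (taking unions of blocks within each parallel class of B indexed by blocks of C) is a (v, k*k', λ'')-BIBD with λ'' = λ*r' + (r-λ)*λ'_2. -/
/-!
Each parallel class of `B` partitions `X`, so a union of blocks of one class indexed by a
block `c` of the indexing design has `k * |c|` points, and it contains a point `x` exactly when
`c` contains the index of the block of that class through `x`. Hence, for distinct points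
`x, y`, the class contributes `r'` blocks through both when they lie in a common block of the
class (this happens for `λ` of the `r` classes) and `λ'_2` blocks otherwise.
-/

open Finset

section Partition

variable {X ι : Type*} {B : ι → Finset X}

theorem pairwiseDisjoint_of_existsUnique (hB : ∀ x, ∃! j, x ∈ B j) (s : Set ι) :
    s.PairwiseDisjoint B := by
  intro j₁ _ j₂ _ hne
  rw [Function.onFun, Finset.disjoint_left]
  intro x h₁ h₂
  exact hne ((hB x).unique h₁ h₂)

variable [DecidableEq X]

theorem card_biUnion_of_existsUnique (hB : ∀ x, ∃! j, x ∈ B j) {k : ℕ}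
    (hsize : ∀ j, #(B j) = k) (c : Finset ι) : #(c.biUnion B) = #c * k := by
  rw [card_biUnion (pairwiseDisjoint_of_existsUnique hB _), sum_const_nat fun j _ => hsize j]

theorem mem_biUnion_iff_of_existsUnique (hB : ∀ x, ∃! j, x ∈ B j) {x : X} {j : ι}
    (hx : x ∈ B j) (c : Finset ι) : x ∈ c.biUnion B ↔ j ∈ c := by
  rw [mem_biUnion]
  constructor
  · rintro ⟨j', hj', hxj'⟩
    rwa [(hB x).unique hx hxj']
  · exact fun hj => ⟨j, hj, hx⟩

theorem card_filter_map_biUnion [DecidableEq ι] (hB : ∀ x, ∃! j, x ∈ B j)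
    (C : Multiset (Finset ι)) {x y : X} {a b : ι} (hxa : x ∈ B a) (hyb : y ∈ B b) :
    Multiset.card ((C.map (·.biUnion B)).filter (fun A => x ∈ A ∧ y ∈ A)) =
      Multiset.card (C.filter (fun c => a ∈ c ∧ b ∈ c)) := by
  rw [Multiset.filter_map, Multiset.card_map]
  congr 1
  refine Multiset.filter_congr fun c _ => ?_
  simp only [Function.comp, mem_biUnion_iff_of_existsUnique hB hxa,
    mem_biUnion_iff_of_existsUnique hB hyb]

end Partition

theorem card_filter_eq_card_filter_mem_mem {X κ ι : Type*} [Fintype κ] [Fintype ι]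
    [DecidableEq X] [DecidableEq ι] {B : κ → ι → Finset X} (hB : ∀ i x, ∃! j, x ∈ B i j) {x y : X}
    {jx jy : κ → ι} (hjx : ∀ i, x ∈ B i (jx i)) (hjy : ∀ i, y ∈ B i (jy i)) :
    #{i | jx i = jy i} = #{p : κ × ι | x ∈ B p.1 p.2 ∧ y ∈ B p.1 p.2} := by
  refine card_bij (fun i _ => (i, jx i)) (fun i hi => ?_) (fun _ _ _ _ h => (Prod.ext_iff.1 h).1)
    (fun p hp => ?_)
  · rw [mem_filter] at hi ⊢
    exact ⟨mem_univ _, hjx i, hi.2 ▸ hjy i⟩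
  · obtain ⟨-, hxp, hyp⟩ := mem_filter.1 hp
    have hx := (hB p.1 x).unique hxp (hjx p.1)
    have hy := (hB p.1 y).unique hyp (hjy p.1)
    exact ⟨p.1, by simp [← hx, ← hy], by rw [← hx]⟩

theorem sum_ite_const_eq {κ : Type*} [Fintype κ] (p : κ → Prop) [DecidablePred p] (a b : ℕ) :
    ∑ i, (if p i then a else b) = #{i | p i} * a + (Fintype.card κ - #{i | p i}) * b := by
  have hcard := card_filter_add_card_filter_not (s := univ) p
  rw [sum_ite, sum_const, sum_const, smul_eq_mul, smul_eq_mul, ← card_univ, ← hcard,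
    Nat.add_sub_cancel_left]

theorem stmt_4_general {X : Type*} [DecidableEq X]
    (k lam r w k' r' lam2' : ℕ)
    (B : Fin r → Fin w → Finset X)
    (hsize : ∀ i j, (B i j).card = k)
    (hpc : ∀ (i : Fin r) (x : X), ∃! j : Fin w, x ∈ B i j)
    (hpair : ∀ x y : X, x ≠ y →
      (Finset.univ.filter (fun p : Fin r × Fin w => x ∈ B p.1 p.2 ∧ y ∈ B p.1 p.2)).card = lam)
    (C : Multiset (Finset (Fin w)))
    (hCsize : ∀ c ∈ C, c.card = k')
    (hCrep : ∀ a : Fin w, Multiset.card (C.filter (fun c => a ∈ c)) = r')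
    (hCpair : ∀ a b : Fin w, a ≠ b →
      Multiset.card (C.filter (fun c => a ∈ c ∧ b ∈ c)) = lam2') :
    ∀ D : Multiset (Finset X),
      D = (Finset.univ.val : Multiset (Fin r)).bind
            (fun i => C.map (fun c => c.biUnion (fun j => B i j))) →
      (∀ A ∈ D, A.card = k * k') ∧
      (∀ x y : X, x ≠ y →
        Multiset.card (D.filter (fun A => x ∈ A ∧ y ∈ A)) = lam * r' + (r - lam) * lam2') := by
  rintro D rfl
  refine ⟨fun A hA => ?_, fun x y hxy => ?_⟩
  · obtain ⟨i, -, c, hc, rfl⟩ := by simpa only [Multiset.mem_bind, Multiset.mem_map] using hA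
    rw [card_biUnion_of_existsUnique (hpc i) (hsize i), hCsize c hc, mul_comm]
  · choose jx hjx using fun i => (hpc i x).exists
    choose jy hjy using fun i => (hpc i y).exists
    have hclass : ∀ i, Multiset.card ((C.map fun c => c.biUnion fun j => B i j).filter
        (fun A => x ∈ A ∧ y ∈ A)) = if jx i = jy i then r' else lam2' := by
      intro i
      rw [card_filter_map_biUnion (hpc i) C (hjx i) (hjy i)]
      split_ifs with h
      · simpa only [h, and_self] using hCrep (jy i)
      · exact hCpair _ _ h
    rw [Multiset.filter_bind, Multiset.card_bind]
    change ∑ i, _ = _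
    simp only [Function.comp_apply, hclass]
    rw [sum_ite_const_eq, Fintype.card_fin, card_filter_eq_card_filter_mem_mem hpc hjx hjy,
      hpair x y hxy]

/-- If the master design is a resolvable (v,k,λ)-BIBD and the indexing design a
(w,k',λ'_2)-BIBD with replication number r', the constructed design is a
(v, k*k', λ'')-BIBD with λ'' = λ*r' + (r-λ)*λ'_2. -/
theorem stmt_4 {X : Type*} [Fintype X] [DecidableEq X]
    (v k lam r w k' r' lam2' : ℕ)
    (hk : 2 ≤ k) (hkv : k < v) (hX : Fintype.card X = v) (hvw : v = k * w)
    (B : Fin r → Fin w → Finset X)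
    (hsize : ∀ i j, (B i j).card = k)
    (hpc : ∀ (i : Fin r) (x : X), ∃! j : Fin w, x ∈ B i j)
    (hpair : ∀ x y : X, x ≠ y →
      (Finset.univ.filter (fun p : Fin r × Fin w => x ∈ B p.1 p.2 ∧ y ∈ B p.1 p.2)).card = lam)
    (C : Multiset (Finset (Fin w)))
    (hk' : 2 ≤ k') (hk'w : k' < w)
    (hCsize : ∀ c ∈ C, c.card = k')
    (hCrep : ∀ a : Fin w, Multiset.card (C.filter (fun c => a ∈ c)) = r')
    (hCpair : ∀ a b : Fin w, a ≠ b →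
      Multiset.card (C.filter (fun c => a ∈ c ∧ b ∈ c)) = lam2') :
    ∀ D : Multiset (Finset X),
      D = (Finset.univ.val : Multiset (Fin r)).bind
            (fun i => C.map (fun c => c.biUnion (fun j => B i j))) →
      (∀ A ∈ D, A.card = k * k') ∧
      (∀ x y : X, x ≠ y →
        Multiset.card (D.filter (fun A => x ∈ A ∧ y ∈ A)) = lam * r' + (r - lam) * lam2') :=
  stmt_4_general k lam r w k' r' lam2' B hsize hpc hpair C hCsize hCrep hCpair
end

section
/- Let (X,B) be a resolvable (v,k,λ)-BIBD with v/k = 4 and r parallel classes, and let the indexing design be the trivial 2-(4,2,1)-design (all 2-subsets of a 4-set). Then the constructed design, formed by taking within each parallel class all unions of two blocks, is a 3-(v, v/2, 3λ)-design. -/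
/-!
Within one parallel class every point lies in exactly one of the four blocks, so a union of two
blocks contains a triple `T` exactly when the (at most three) blocks meeting `T` are among the
two chosen ones. If `T` lies in a single block this happens for `3` of the `6` pairs, if it
meets two blocks for `1`, and if it meets three blocks for none. In each case the count equals
the number of pairs of points of `T` lying in a common block. Summing over the parallel classes
and using that each pair of points lies in `λ` blocks gives `3λ`.
-/

open Finset

def pairUnions {X J : Type*} [DecidableEq X] [Fintype J] (P : J → Finset X) :
    Multiset (Finset X) :=
  (univ.filter fun c : Finset J => c.card = 2).val.map fun c => c.biUnion P

section ParallelClass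

variable {X J : Type*} {P : J → Finset X} {f : X → J}

theorem pairwiseDisjoint_of_mem_iff (hf : ∀ x j, x ∈ P j ↔ j = f x) :
    (Set.univ : Set J).PairwiseDisjoint P := by
  intro j₁ _ j₂ _ hne
  refine Finset.disjoint_left.2 fun x h₁ h₂ => hne ?_
  rw [(hf x j₁).1 h₁, (hf x j₂).1 h₂]

theorem card_biUnion_of_mem_iff [DecidableEq X] {k : ℕ} (hf : ∀ x j, x ∈ P j ↔ j = f x)
    (hsize : ∀ j, (P j).card = k) (c : Finset J) : (c.biUnion P).card = c.card * k := by
  rw [card_biUnion fun j₁ _ j₂ _ => pairwiseDisjoint_of_mem_iff hf (Set.mem_univ j₁)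
    (Set.mem_univ j₂)]
  simp [hsize]

theorem subset_biUnion_iff_image_subset [DecidableEq X] [DecidableEq J] (hf : ∀ x j, x ∈ P j ↔ j = f x)
    (T : Finset X) (c : Finset J) : T ⊆ c.biUnion P ↔ T.image f ⊆ c := by
  constructor
  · intro h j hj
    obtain ⟨x, hx, rfl⟩ := mem_image.1 hj
    obtain ⟨j', hj', hx'⟩ := mem_biUnion.1 (h hx)
    rwa [(hf x j').1 hx'] at hj'
  · intro h x hx
    exact mem_biUnion.2 ⟨f x, h (mem_image_of_mem f hx), (hf x (f x)).2 rfl⟩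

end ParallelClass

/-- This is the only place where `w = 4` enters: a triple inside one block lies in `w - 1 = 3`
of the unions, which is also the number of its pairs. -/
theorem card_filter_card_two_superset_fin_four (a b c : Fin 4) :
    (univ.filter fun s : Finset (Fin 4) => s.card = 2 ∧ {a, b, c} ⊆ s).card =
      (if a = b then 1 else 0) + (if b = c then 1 else 0) + (if a = c then 1 else 0) := by
  revert a b c
  decide

theorem card_filter_pairUnions_superset {X : Type*} [DecidableEq X] {P : Fin 4 → Finset X}
    {f : X → Fin 4} (hf : ∀ x j, x ∈ P j ↔ j = f x) (x y z : X) :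
    Multiset.card ((pairUnions P).filter fun A => {x, y, z} ⊆ A) =
      (if f x = f y then 1 else 0) + (if f y = f z then 1 else 0) +
        (if f x = f z then 1 else 0) := by
  rw [← card_filter_card_two_superset_fin_four, pairUnions, Multiset.filter_map,
    Multiset.card_map, ← filter_val, ← card_def, filter_filter]
  congr 1
  refine filter_congr fun c _ => ?_
  simp only [Function.comp_apply, subset_biUnion_iff_image_subset hf, image_insert,
    image_singleton]

theorem card_filter_mem_mem_eq_sum {X ι J : Type*} [DecidableEq X] [Fintype ι] [Fintype J] [DecidableEq J]
    {B : ι → J → Finset X} {f : ι → X → J} (hf : ∀ i x j, x ∈ B i j ↔ j = f i x) (x y : X) :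
    (univ.filter fun p : ι × J => x ∈ B p.1 p.2 ∧ y ∈ B p.1 p.2).card =
      ∑ i, if f i x = f i y then 1 else 0 := by
  rw [card_filter, Fintype.sum_prod_type]
  refine sum_congr rfl fun i _ => ?_
  by_cases h : f i x = f i y
  · simp [hf, h]
  · simp only [hf, h, if_false]
    refine sum_eq_zero fun j _ => if_neg ?_
    rintro ⟨rfl, hj⟩
    exact h hj

theorem exists_eq_iff_mem_of_existsUnique {X ι J : Type*} {B : ι → J → Finset X}
    (hpc : ∀ i x, ∃! j, x ∈ B i j) : ∃ f : ι → X → J, ∀ i x j, x ∈ B i j ↔ j = f i x := by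
  choose f hf using hpc
  exact ⟨f, fun i x j => ⟨fun h => (hf i x).2 j h, fun h => h ▸ (hf i x).1⟩⟩

theorem stmt_9_general {X : Type*} [DecidableEq X]
    (v k lam r : ℕ)
    (hvw : v = k * 4)
    (B : Fin r → Fin 4 → Finset X)
    (hsize : ∀ i j, (B i j).card = k)
    (hpc : ∀ (i : Fin r) (x : X), ∃! j : Fin 4, x ∈ B i j)
    (hpair : ∀ x y : X, x ≠ y →
      (Finset.univ.filter (fun p : Fin r × Fin 4 => x ∈ B p.1 p.2 ∧ y ∈ B p.1 p.2)).card = lam) :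
    ∀ D : Multiset (Finset X),
      D = (Finset.univ.val : Multiset (Fin r)).bind
            (fun i => ((Finset.univ.filter (fun c : Finset (Fin 4) => c.card = 2)).val).map
              (fun c => c.biUnion (fun j => B i j))) →
      (∀ A ∈ D, A.card = v / 2) ∧
      (∀ T : Finset X, T.card = 3 →
        Multiset.card (D.filter (fun A => T ⊆ A)) = 3 * lam) := by
  rintro D rfl
  obtain ⟨f, hf⟩ := exists_eq_iff_mem_of_existsUnique hpc
  constructor
  · intro A hA
    obtain ⟨i, -, hA⟩ := Multiset.mem_bind.1 hA
    obtain ⟨c, hc, rfl⟩ := Multiset.mem_map.1 hA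
    rw [card_biUnion_of_mem_iff (hf i) (hsize i), (mem_filter.1 (mem_def.2 hc)).2]
    omega
  · intro T hT
    obtain ⟨x, y, z, hxy, hxz, hyz, rfl⟩ := card_eq_three.1 hT
    have hclass := fun i => card_filter_pairUnions_superset (hf i) x y z
    simp only [pairUnions] at hclass
    rw [Multiset.filter_bind, Multiset.card_bind]
    change ∑ i, _ = _
    simp only [Function.comp_apply, hclass, sum_add_distrib,
      ← card_filter_mem_mem_eq_sum hf, hpair _ _ hxy, hpair _ _ hyz, hpair _ _ hxz]
    ring

/-- If (X,B) is a resolvable (v,k,λ)-BIBD with v/k = 4, then the design formed by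
taking, within each parallel class, all unions of two blocks, is a 3-(v, v/2, 3λ)-design. -/
theorem stmt_9 {X : Type*} [Fintype X] [DecidableEq X]
    (v k lam r : ℕ)
    (hk : 2 ≤ k) (hkv : k < v) (hX : Fintype.card X = v) (hvw : v = k * 4)
    (B : Fin r → Fin 4 → Finset X)
    (hsize : ∀ i j, (B i j).card = k)
    (hpc : ∀ (i : Fin r) (x : X), ∃! j : Fin 4, x ∈ B i j)
    (hpair : ∀ x y : X, x ≠ y →
      (Finset.univ.filter (fun p : Fin r × Fin 4 => x ∈ B p.1 p.2 ∧ y ∈ B p.1 p.2)).card = lam) :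
    ∀ D : Multiset (Finset X),
      D = (Finset.univ.val : Multiset (Fin r)).bind
            (fun i => ((Finset.univ.filter (fun c : Finset (Fin 4) => c.card = 2)).val).map
              (fun c => c.biUnion (fun j => B i j))) →
      (∀ A ∈ D, A.card = v / 2) ∧
      (∀ T : Finset X, T.card = 3 →
        Multiset.card (D.filter (fun A => T ⊆ A)) = 3 * lam) :=
  stmt_9_general v k lam r hvw B hsize hpc hpair
end
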